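/- Let q be a rooted Boolean CQ and K a DL-Lite_core^bag ontology. If two e-valuations (ν¹, ν¹_S, …) and (ν², ν²_S, …) of the enumerated query q^e over the enumerated canonical bag model C(K)^e are different, then there exist an individual a, an e-atom [S(t):m] ∈ q^e, and i ∈ {1,2} such that ν^i(a) occurs among the components of ν^i(t) and ν¹_S([S(t):m]) ≠ ν²_S([S(t):m]). -/

import Mathlib

/-!
Common formalization of the bag semantics of DL-Lite ontologies
(Nikolaou et al., "The Bag Semantics of Ontology-Based Data Access").
-/

open scoped Classical

noncomputable section

/-- Individuals (constants). -/
abbrev Ind : Type := ℕ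
/-- Variables. -/
abbrev Var : Type := ℕ
/-- Atomic concepts (unary predicates). -/
abbrev AtomicConcept : Type := ℕ
/-- Atomic roles (binary predicates). -/
abbrev AtomicRole : Type := ℕ

/-- A role is an atomic role or its inverse. -/
inductive Role where
  | atomic : AtomicRole → Role
  | inv : AtomicRole → Role
  deriving DecidableEq

/-- A concept is an atomic concept or `∃R` for a role `R`. -/
inductive DLConcept where
  | atomic : AtomicConcept → DLConcept
  | ex : Role → DLConcept
  deriving DecidableEq

/-- TBox axioms: inclusions and disjointness axioms between concepts or roles. -/
inductive TBoxAxiom where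
  | cIncl : DLConcept → DLConcept → TBoxAxiom
  | rIncl : Role → Role → TBoxAxiom
  | cDisj : DLConcept → DLConcept → TBoxAxiom
  | rDisj : Role → Role → TBoxAxiom
  deriving DecidableEq

/-- A DL-Lite_R TBox: a finite set of TBox axioms. -/
abbrev TBox : Type := Finset TBoxAxiom

/-- A DL-Lite_core TBox: only concept inclusions and concept disjointness axioms. -/
def TBox.IsCore (T : TBox) : Prop :=
  ∀ ax ∈ T, (∃ C D, ax = TBoxAxiom.cIncl C D) ∨ (∃ C D, ax = TBoxAxiom.cDisj C D)

/-- ABox assertions. -/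
inductive Assertion where
  | conceptA : AtomicConcept → Ind → Assertion
  | roleA : AtomicRole → Ind → Ind → Assertion
  deriving DecidableEq

/-- A bag ABox: a finite bag of assertions (represented as a multiset). -/
abbrev BagABox : Type := Multiset Assertion

/-- Multiplicity of an assertion in a bag ABox, as an extended natural. -/
def BagABox.mult (A : BagABox) (s : Assertion) : ℕ∞ := (A.count s : ℕ∞)

/-- Sum of an arbitrary family of extended naturals. -/
def bagSum {α : Type*} (f : α → ℕ∞) : ℕ∞ := ⨆ s : Finset α, ∑ x ∈ s, f x

/-- A bag interpretation. -/
structure BagInterp : Type 1 where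
  Δ : Type
  dne : Nonempty Δ
  indMap : Ind → Δ
  indInj : Function.Injective indMap
  cI : AtomicConcept → Δ → ℕ∞
  rI : AtomicRole → Δ → Δ → ℕ∞

/-- Extension of the interpretation function to roles. -/
def BagInterp.roleMult (I : BagInterp) : Role → I.Δ → I.Δ → ℕ∞
  | Role.atomic P => fun u v => I.rI P u v
  | Role.inv P => fun u v => I.rI P v u

/-- Extension of the interpretation function to concepts. -/
def BagInterp.conceptMult (I : BagInterp) : DLConcept → I.Δ → ℕ∞
  | DLConcept.atomic A => fun u => I.cI A u
  | DLConcept.ex R => fun u => bagSum (fun v => I.roleMult R u v)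

/-- Multiplicity of an assertion in a bag interpretation. -/
def BagInterp.assertMult (I : BagInterp) : Assertion → ℕ∞
  | Assertion.conceptA A a => I.cI A (I.indMap a)
  | Assertion.roleA P a b => I.rI P (I.indMap a) (I.indMap b)

/-- Satisfaction of a TBox axiom by a bag interpretation. -/
def BagInterp.SatisfiesAx (I : BagInterp) : TBoxAxiom → Prop
  | TBoxAxiom.cIncl C D => ∀ u, I.conceptMult C u ≤ I.conceptMult D u
  | TBoxAxiom.rIncl R S => ∀ u v, I.roleMult R u v ≤ I.roleMult S u v
  | TBoxAxiom.cDisj C D => ∀ u, min (I.conceptMult C u) (I.conceptMult D u) = 0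
  | TBoxAxiom.rDisj R S => ∀ u v, min (I.roleMult R u v) (I.roleMult S u v) = 0

/-- A DL-Lite^bag ontology. -/
structure Ontology : Type where
  tbox : TBox
  abox : BagABox

/-- `I` is a bag model of the ontology `K`. -/
def BagInterp.IsModel (I : BagInterp) (K : Ontology) : Prop :=
  (∀ ax ∈ K.tbox, I.SatisfiesAx ax) ∧
  ∀ s : Assertion, BagABox.mult K.abox s ≤ I.assertMult s

/-- Satisfiability of an ontology under bag semantics. -/
def Ontology.Satisfiable (K : Ontology) : Prop := ∃ I : BagInterp, I.IsModel K

/- ## Conjunctive queries -/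

/-- Terms: variables or individuals. -/
inductive Term where
  | var : Var → Term
  | ind : Ind → Term
  deriving DecidableEq

def Term.varsOf : Term → List Var
  | Term.var v => [v]
  | Term.ind _ => []

def Term.indsOf : Term → List Ind
  | Term.var _ => []
  | Term.ind a => [a]

/-- Query atoms: concept atoms, role atoms, and equalities. -/
inductive QAtom where
  | conceptAt : AtomicConcept → Term → QAtom
  | roleAt : AtomicRole → Term → Term → QAtom
  | eqAt : Var → Term → QAtom
  deriving DecidableEq

def QAtom.terms : QAtom → List Term
  | QAtom.conceptAt _ t => [t]
  | QAtom.roleAt _ t₁ t₂ => [t₁, t₂]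
  | QAtom.eqAt z t => [Term.var z, t]

def QAtom.vars : QAtom → List Var
  | QAtom.conceptAt _ t => t.varsOf
  | QAtom.roleAt _ t₁ t₂ => t₁.varsOf ++ t₂.varsOf
  | QAtom.eqAt z t => z :: t.varsOf

/-- A conjunctive query `q(x) = ∃y. φ(x,y)`: a tuple of answer variables,
a tuple of existential variables, and a conjunction (list, i.e. allowing
repetitions) of atoms. -/
structure CQ : Type where
  answerVars : List Var
  existVars : List Var
  atoms : List QAtom

def CQ.vars (q : CQ) : List Var := q.answerVars ++ q.existVars

/-- Value of a term under a valuation of the variables. -/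
def termVal (I : BagInterp) (f : Var → I.Δ) : Term → I.Δ
  | Term.var v => f v
  | Term.ind a => I.indMap a

/-- Multiplicity contributed by an atom under a valuation: for predicate atoms the
multiplicity of the image tuple, for equalities the indicator of satisfaction. -/
def QAtom.mult (I : BagInterp) (f : Var → I.Δ) : QAtom → ℕ∞
  | QAtom.conceptAt A t => I.cI A (termVal I f t)
  | QAtom.roleAt P t₁ t₂ => I.rI P (termVal I f t₁) (termVal I f t₂)
  | QAtom.eqAt z t => if f z = termVal I f t then 1 else 0

/-- The bag answers `q^I(ā)`: the sum, over all valuations of the variables of `q`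
mapping the answer variables to `ā` (valuations are normalized to a fixed junk
value outside the variables of `q`), of the product of the multiplicities of the
atom occurrences of `q`. -/
def CQ.bagAnswer (q : CQ) (I : BagInterp) (a : List Ind) : ℕ∞ :=
  bagSum (fun f : {f : Var → I.Δ //
      (∀ v, v ∉ q.vars → f v = I.indMap 0) ∧
      q.answerVars.map f = a.map I.indMap} =>
    (q.atoms.map (QAtom.mult I f.1)).prod)

/-- Bag certain answers: pointwise minimum over all bag models. -/
def bagCertain (K : Ontology) (q : CQ) (a : List Ind) : ℕ∞ :=
  ⨅ (I : BagInterp) (_ : I.IsModel K), q.bagAnswer I a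

/-- Base relation of the equivalence relation generated by the equality atoms. -/
def CQ.eqBase (q : CQ) : Term → Term → Prop := fun t₁ t₂ =>
  ∃ z t, QAtom.eqAt z t ∈ q.atoms ∧ t₁ = Term.var z ∧ t₂ = t

/-- Equivalence of terms generated by the equality atoms of `q`. -/
def CQ.eqRel (q : CQ) : Term → Term → Prop := Relation.EqvGen q.eqBase

/-- Safety: the class of every variable contains a term occurring in a
non-equality atom. -/
def CQ.Safe (q : CQ) : Prop :=
  ∀ v ∈ q.vars, ∃ t : Term, ∃ atm ∈ q.atoms,
    (∀ z s, atm ≠ QAtom.eqAt z s) ∧ t ∈ QAtom.terms atm ∧ q.eqRel (Term.var v) t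

/-- Well-formedness of CQs: repetition-free disjoint tuples of variables, all
variables of the atoms among the declared variables, and safety. -/
def CQ.WellFormed (q : CQ) : Prop :=
  q.answerVars.Nodup ∧ q.existVars.Nodup ∧
  (∀ v ∈ q.answerVars, v ∉ q.existVars) ∧
  (∀ atm ∈ q.atoms, ∀ v ∈ QAtom.vars atm, v ∈ q.vars) ∧
  q.Safe

def CQ.mentionsTerm (q : CQ) (t : Term) : Prop := ∃ atm ∈ q.atoms, t ∈ QAtom.terms atm

/-- Adjacency in the Gaifman graph of `q` (on terms; equality atoms merge the
classes of their two terms, which for connectivity purposes is the same as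
making them adjacent). -/
def CQ.gaifmanAdj (q : CQ) : Term → Term → Prop := fun t₁ t₂ =>
  ∃ atm ∈ q.atoms, t₁ ∈ QAtom.terms atm ∧ t₂ ∈ QAtom.terms atm

/-- A CQ is rooted if every connected component of its Gaifman graph contains
an answer variable or an individual. -/
def CQ.Rooted (q : CQ) : Prop :=
  ∀ t : Term, q.mentionsTerm t →
    ∃ t' : Term, Relation.ReflTransGen q.gaifmanAdj t t' ∧
      ((∃ v ∈ q.answerVars, t' = Term.var v) ∨ ∃ a : Ind, t' = Term.ind a)

/- ## Set semantics -/

/-- A classical (set) interpretation. -/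
structure SetInterp : Type 1 where
  Δ : Type
  dne : Nonempty Δ
  indMap : Ind → Δ
  indInj : Function.Injective indMap
  cI : AtomicConcept → Set Δ
  rI : AtomicRole → Set (Δ × Δ)

def SetInterp.roleSet (I : SetInterp) : Role → Set (I.Δ × I.Δ)
  | Role.atomic P => I.rI P
  | Role.inv P => {p | (p.2, p.1) ∈ I.rI P}

def SetInterp.conceptSet (I : SetInterp) : DLConcept → Set I.Δ
  | DLConcept.atomic A => I.cI A
  | DLConcept.ex R => {u | ∃ v, (u, v) ∈ I.roleSet R}

def SetInterp.SatisfiesAx (I : SetInterp) : TBoxAxiom → Prop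
  | TBoxAxiom.cIncl C D => I.conceptSet C ⊆ I.conceptSet D
  | TBoxAxiom.rIncl R S => I.roleSet R ⊆ I.roleSet S
  | TBoxAxiom.cDisj C D => I.conceptSet C ∩ I.conceptSet D = ∅
  | TBoxAxiom.rDisj R S => I.roleSet R ∩ I.roleSet S = ∅

def SetInterp.SatisfiesAssertion (I : SetInterp) : Assertion → Prop
  | Assertion.conceptA A a => I.indMap a ∈ I.cI A
  | Assertion.roleA P a b => (I.indMap a, I.indMap b) ∈ I.rI P

/-- `I` is a (set) model of the TBox `T` and the set ABox `A`. -/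
def SetInterp.IsModelOf (I : SetInterp) (T : TBox) (A : Finset Assertion) : Prop :=
  (∀ ax ∈ T, I.SatisfiesAx ax) ∧ ∀ s ∈ A, I.SatisfiesAssertion s

def setTermVal (I : SetInterp) (f : Var → I.Δ) : Term → I.Δ
  | Term.var v => f v
  | Term.ind a => I.indMap a

def SetInterp.SatAtom (I : SetInterp) (f : Var → I.Δ) : QAtom → Prop
  | QAtom.conceptAt A t => setTermVal I f t ∈ I.cI A
  | QAtom.roleAt P t₁ t₂ => (setTermVal I f t₁, setTermVal I f t₂) ∈ I.rI P
  | QAtom.eqAt z t => f z = setTermVal I f t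

/-- `q(ā)` holds in the set interpretation `I`. -/
def SetInterp.SatCQ (I : SetInterp) (q : CQ) (a : List Ind) : Prop :=
  ∃ f : Var → I.Δ, q.answerVars.map f = a.map I.indMap ∧ ∀ atm ∈ q.atoms, I.SatAtom f atm

/-- Entailment of a concept inclusion from a TBox (standard set semantics). -/
def TBox.EntailsCI (T : TBox) (C D : DLConcept) : Prop :=
  ∀ I : SetInterp, (∀ ax ∈ T, I.SatisfiesAx ax) → I.conceptSet C ⊆ I.conceptSet D

/- ## The canonical bag model -/

/-- Domain elements of the canonical model: individuals and anonymous elements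
`w^j_{u,R}`. -/
inductive CanElem where
  | ind : Ind → CanElem
  | anon : CanElem → Role → ℕ → CanElem
  deriving DecidableEq

def CanElem.isAnon : CanElem → Prop
  | CanElem.ind _ => False
  | CanElem.anon _ _ _ => True

/-- A stage of the canonical-model construction: a set of active elements and
bag interpretations of the predicates. -/
structure PreInterp : Type where
  active : Set CanElem
  c : AtomicConcept → CanElem → ℕ∞
  r : AtomicRole → CanElem → CanElem → ℕ∞

def PreInterp.toInterp (P : PreInterp) : BagInterp where
  Δ := CanElem
  dne := ⟨CanElem.ind 0⟩
  indMap := CanElem.ind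
  indInj := fun a b h => by cases h; rfl
  cI := P.c
  rI := P.r

/-- Concept closure: `ccl(u,I,T)(C)` is the supremum of `C₀^I(u)` over all
concepts `C₀` with `T ⊨ C₀ ⊑ C`. -/
def cclI (T : TBox) (I : BagInterp) (C : DLConcept) (u : I.Δ) : ℕ∞ :=
  ⨆ C₀ : {C₀ : DLConcept // TBox.EntailsCI T C₀ C}, I.conceptMult C₀.1 u

def PreInterp.ccl (P : PreInterp) (T : TBox) (u : CanElem) (C : DLConcept) : ℕ∞ :=
  cclI T P.toInterp C u

/-- `δ = ccl(u,C_{i-1},T)(∃R) − (∃R)^{C_{i-1}}(u)` (truncated subtraction). -/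
def PreInterp.delta (P : PreInterp) (T : TBox) (u : CanElem) (R : Role) : ℕ∞ :=
  P.ccl T u (DLConcept.ex R) - P.toInterp.conceptMult (DLConcept.ex R) u

/-- The anonymous elements freshly added when stepping from `P`. -/
def PreInterp.NewAnon (P : PreInterp) (T : TBox) (w : CanElem) : Prop :=
  ∃ u R j, w = CanElem.anon u R j ∧ u ∈ P.active ∧ (j : ℕ∞) < P.delta T u R

/-- One step of the canonical-model construction. -/
def PreInterp.step (P : PreInterp) (T : TBox) : PreInterp where
  active := P.active ∪ {w | P.NewAnon T w}
  c := fun A u => if u ∈ P.active then P.ccl T u (DLConcept.atomic A) else 0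
  r := fun P₀ u v =>
    if u ∈ P.active ∧ v ∈ P.active then P.r P₀ u v
    else if ∃ j, v = CanElem.anon u (Role.atomic P₀) j ∧ P.NewAnon T v then 1
    else if ∃ j, u = CanElem.anon v (Role.inv P₀) j ∧ P.NewAnon T u then 1
    else 0

/-- The stages `C_i(K)` of the canonical bag model. -/
def canStage (K : Ontology) : ℕ → PreInterp
  | 0 =>
    { active := Set.range CanElem.ind
      c := fun A u =>
        match u with
        | CanElem.ind a => BagABox.mult K.abox (Assertion.conceptA A a)
        | _ => 0
      r := fun P u v =>
        match u, v with
        | CanElem.ind a, CanElem.ind b => BagABox.mult K.abox (Assertion.roleA P a b)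
        | _, _ => 0 }
  | (i + 1) => (canStage K i).step K.tbox

/-- The canonical bag model `C(K) = ⋃_{i ≥ 0} C_i(K)` (pointwise maximum). -/
def canInterp (K : Ontology) : BagInterp where
  Δ := CanElem
  dne := ⟨CanElem.ind 0⟩
  indMap := CanElem.ind
  indInj := fun a b h => by cases h; rfl
  cI := fun A u => ⨆ i, (canStage K i).c A u
  rI := fun P u v => ⨆ i, (canStage K i).r P u v

/-- The canonical bag model `C(⟨∅,A⟩)` of the ontology with empty TBox:
individuals as domain, every predicate interpreted by its ABox bag. -/
def emptyCanInterp (A : BagABox) : BagInterp where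
  Δ := Ind
  dne := ⟨0⟩
  indMap := id
  indInj := fun _ _ h => h
  cI := fun C a => BagABox.mult A (Assertion.conceptA C a)
  rI := fun P a b => BagABox.mult A (Assertion.roleA P a b)

/-- `[q,z]^{C(K)}`: bag answers over the canonical model computed only over
valuations sending the variables of `z` to anonymous elements and the remaining
existential variables to individuals. -/
def CQ.restrictedAnswer (q : CQ) (K : Ontology) (z : Finset Var) (a : List Ind) : ℕ∞ :=
  bagSum (fun f : {f : Var → CanElem //
      (∀ v, v ∉ q.vars → f v = CanElem.ind 0) ∧
      q.answerVars.map f = a.map CanElem.ind ∧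
      ∀ v ∈ q.existVars, (v ∈ z → CanElem.isAnon (f v)) ∧ (v ∉ z → ∃ b : Ind, f v = CanElem.ind b)} =>
    (q.atoms.map (QAtom.mult (canInterp K) f.1)).prod)

/- ## Ma-connected subsets, realisability, and the per-`z` rewritten query -/

/-- `t` is a variable belonging to `z`. -/
def Term.IsZVar (t : Term) (z : Finset Var) : Prop := ∃ v ∈ z, t = Term.var v

/-- Adjacency in the Gaifman graph restricted to nodes that are variables of `z`. -/
def CQ.zAdj (q : CQ) (z : Finset Var) : Term → Term → Prop := fun t₁ t₂ =>
  q.gaifmanAdj t₁ t₂ ∧ t₁.IsZVar z ∧ t₂.IsZVar z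

/-- `z'` is maximally connected in the anonymous part (ma-connected) within `z`. -/
def CQ.MAConnected (q : CQ) (z z' : Finset Var) : Prop :=
  z' ⊆ z ∧
  (∀ v ∈ z', ∀ w ∈ z, Relation.ReflTransGen (q.zAdj z) (Term.var v) (Term.var w) → w ∈ z') ∧
  (∀ v ∈ z', ∀ w ∈ z', Relation.ReflTransGen (q.zAdj z) (Term.var v) (Term.var w))

/-- `φ_{z'}`: the subconjunction of all atoms of `q` mentioning a variable of `z'`. -/
def CQ.subAtoms (q : CQ) (z' : Finset Var) : List QAtom :=
  q.atoms.filter (fun atm => decide (∃ v ∈ z', v ∈ QAtom.vars atm))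

def termsOfList (l : List QAtom) : List Term :=
  l.foldr (fun atm acc => QAtom.terms atm ++ acc) []

/-- `t_{z'}`: all terms occurring in `φ_{z'}` that are not variables of `z`. -/
def CQ.tTerms (q : CQ) (z z' : Finset Var) : List Term :=
  (termsOfList (q.subAtoms z')).filter (fun t => decide (¬ t.IsZVar z))

/-- `atm` is a legitimate choice of `α_{z'}`: an atom of `φ_{z'}` of the form
`P(t,z)` or `P(z,t)` with `z ∈ z'` and the term `t` not a variable of `z`. -/
def IsAlphaFor (q : CQ) (z z' : Finset Var) (atm : QAtom) : Prop :=
  atm ∈ q.subAtoms z' ∧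
  ((∃ P t v, v ∈ z' ∧ ¬ Term.IsZVar t z ∧ atm = QAtom.roleAt P t (Term.var v)) ∨
   (∃ P t v, v ∈ z' ∧ ¬ Term.IsZVar t z ∧ atm = QAtom.roleAt P (Term.var v) t))

def CQ.inds (q : CQ) : List Ind :=
  (termsOfList q.atoms).foldr (fun t acc => t.indsOf ++ acc) []

def CQ.maxInd (q : CQ) : Ind := q.inds.foldr max 0

/-- The individual `a` of `q^a_{z'}`: the individual among `t_{z'}` if one
exists, and a fresh individual otherwise. -/
def freshA (q : CQ) (z z' : Finset Var) : Ind :=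
  if h : ∃ c : Ind, Term.ind c ∈ q.tTerms z z' then h.choose else q.maxInd + 1

/-- A fresh individual `b` (distinct from `freshA`). -/
def freshB (q : CQ) : Ind := q.maxInd + 2

/-- The one-assertion bag ABox `A'` used to test realisability: `{P(a,b)}` if
`α_{z'} = P(t,z)` and `{P(b,a)}` if `α_{z'} = P(z,t)`. -/
def alphaABox (z' : Finset Var) (atm : QAtom) (a b : Ind) : BagABox :=
  match atm with
  | QAtom.roleAt P _ t₂ =>
      if Term.IsZVar t₂ z' then {Assertion.roleA P a b} else {Assertion.roleA P b a}
  | _ => 0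

def subVars (q : CQ) (z' : Finset Var) : List Var :=
  (q.subAtoms z').foldr (fun atm acc => QAtom.vars atm ++ acc) []

/-- The bag answer `(q^a_{z'})^{C(⟨T,A'⟩)}(⟨⟩)` of the Boolean query
`q^a_{z'}() = ∃x'.∃z'. φ_{z'} ∧ ⋀_{t ∈ t_{z'}}(t = a) ∧ ⋀_{z ∈ z'}(z ≠ a)`
over the canonical model of `⟨T,A'⟩`. -/
def realQAnswer (T : TBox) (q : CQ) (z z' : Finset Var) (atm : QAtom) : ℕ∞ :=
  bagSum (fun f : {f : Var → CanElem //
      (∀ v, v ∉ subVars q z' → f v = CanElem.ind 0) ∧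
      (∀ t ∈ q.tTerms z z',
        termVal (canInterp ⟨T, alphaABox z' atm (freshA q z z') (freshB q)⟩) f t
          = CanElem.ind (freshA q z z')) ∧
      ∀ v ∈ z', f v ≠ CanElem.ind (freshA q z z')} =>
    ((q.subAtoms z').map
      (QAtom.mult (canInterp ⟨T, alphaABox z' atm (freshA q z z') (freshB q)⟩) f.1)).prod)

/-- Equality-consistency of `z`: no equality atom `z = t` with `z ∈ z` and `t ∉ z`. -/
def EqConsistent (q : CQ) (z : Finset Var) : Prop :=
  ∀ v t, QAtom.eqAt v t ∈ q.atoms → v ∈ z → Term.IsZVar t z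

/-- The ma-connected subset `z'` is realisable by `T` (w.r.t. the chosen `α_{z'}`). -/
def RealisableMA (T : TBox) (q : CQ) (z z' : Finset Var) (atm : QAtom) : Prop :=
  1 ≤ realQAnswer T q z z' atm

/-- `z` is realisable by `T`: equality-consistent and every nonempty
ma-connected subset of `z` is realisable. -/
def RealisableZ (T : TBox) (q : CQ) (z : Finset Var) (alpha : Finset Var → QAtom) : Prop :=
  EqConsistent q z ∧
  ∀ z' : Finset Var, q.MAConnected z z' → z'.Nonempty → RealisableMA T q z z' (alpha z')

/-- The nonempty ma-connected subsets of `z`. -/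
def maSets (q : CQ) (z : Finset Var) : Finset (Finset Var) :=
  z.powerset.filter (fun z' => q.MAConnected z z' ∧ z'.Nonempty)

def tTermVars (q : CQ) (z z' : Finset Var) : List Var :=
  (q.tTerms z z').foldr (fun t acc => Term.varsOf t ++ acc) []

/-- The equalities identifying all the terms of `t_{z'}`. -/
def eqAtomsFor (q : CQ) (z z' : Finset Var) : List QAtom :=
  (tTermVars q z z').foldr
    (fun v acc => ((q.tTerms z z').map (fun t => QAtom.eqAt v t)) ++ acc) []

/-- Atoms of `q_z`: the atoms of `q` not mentioning a variable of `z`, plus,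
for each nonempty ma-connected `z' ⊆ z`, the atom `α_{z'}` together with the
equalities identifying the terms of `t_{z'}`. -/
def qzAtoms (q : CQ) (z : Finset Var) (alpha : Finset Var → QAtom) : List QAtom :=
  q.atoms.filter (fun atm => decide (¬ ∃ v ∈ z, v ∈ QAtom.vars atm))
    ++ (maSets q z).toList.foldr (fun z' acc => alpha z' :: (eqAtomsFor q z z' ++ acc)) []

/-- The CQ `q_z(x) = ∃y'. φ_z(x,y')`. -/
def qz (q : CQ) (z : Finset Var) (alpha : Finset Var → QAtom) : CQ where
  answerVars := q.answerVars
  existVars := q.existVars.filter (fun v => decide (∃ atm ∈ qzAtoms q z alpha, v ∈ QAtom.vars atm))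
  atoms := qzAtoms q z alpha

/- ## The BALG rewriting `q̄` -/

/-- Value of an atom of `q_z` after the rewriting step 3 (`chasing back'' with
the TBox): concept atoms `A(t)` become `⋁_{T ⊨ C ⊑ A} ζ_C(t)`, role atoms with a
`z`-variable become the corresponding truncated difference, and the remaining
atoms are evaluated as before. -/
def rewAtomVal (T : TBox) (I : BagInterp) (z : Finset Var) (f : Var → I.Δ) : QAtom → ℕ∞
  | QAtom.conceptAt A t => cclI T I (DLConcept.atomic A) (termVal I f t)
  | QAtom.roleAt P t₁ t₂ =>
      if Term.IsZVar t₂ z then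
        cclI T I (DLConcept.ex (Role.atomic P)) (termVal I f t₁)
          - I.conceptMult (DLConcept.ex (Role.atomic P)) (termVal I f t₁)
      else if Term.IsZVar t₁ z then
        cclI T I (DLConcept.ex (Role.inv P)) (termVal I f t₂)
          - I.conceptMult (DLConcept.ex (Role.inv P)) (termVal I f t₂)
      else I.rI P (termVal I f t₁) (termVal I f t₂)
  | QAtom.eqAt v t => if f v = termVal I f t then 1 else 0

/-- Bag answers of the BALG query `q̄_z`, obtained from `q_z` by projecting only
the variables of `y' ∖ z` and replacing atoms as in `rewAtomVal`. -/
def rewAnswer (T : TBox) (qq : CQ) (z : Finset Var) (I : BagInterp) (a : List Ind) : ℕ∞ :=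
  bagSum (fun f : {f : Var → I.Δ //
      (∀ v, v ∉ qq.answerVars ++ qq.existVars.filter (fun u => decide (u ∉ z)) →
        f v = I.indMap 0) ∧
      qq.answerVars.map f = a.map I.indMap} =>
    (qq.atoms.map (rewAtomVal T I z f.1)).prod)

/- ## BALG¹_ε queries -/

def Term.fvars (t : Term) : Finset Var :=
  match t with
  | Term.var v => {v}
  | Term.ind _ => ∅

/-- Syntax of BALG¹_ε queries. -/
inductive BQuery where
  | atomC : AtomicConcept → Term → BQuery
  | atomR : AtomicRole → Term → Term → BQuery
  | conj : BQuery → BQuery → BQuery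
  | eqSel : BQuery → Var → Term → BQuery
  | proj : List Var → BQuery → BQuery
  | maxU : BQuery → BQuery → BQuery
  | arithU : BQuery → BQuery → BQuery
  | diff : BQuery → BQuery → BQuery

/-- Answer variables of a BALG¹_ε query. -/
def BQuery.fv : BQuery → Finset Var
  | BQuery.atomC _ t => t.fvars
  | BQuery.atomR _ t₁ t₂ => t₁.fvars ∪ t₂.fvars
  | BQuery.conj q₁ q₂ => q₁.fv ∪ q₂.fv
  | BQuery.eqSel q _ t => q.fv ∪ t.fvars
  | BQuery.proj ys q => q.fv \ ys.toFinset
  | BQuery.maxU q₁ _ => q₁.fv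
  | BQuery.arithU q₁ _ => q₁.fv
  | BQuery.diff q₁ _ => q₁.fv

/-- Well-formedness of BALG¹_ε queries. -/
def BQuery.WF : BQuery → Prop
  | BQuery.atomC _ _ => True
  | BQuery.atomR _ _ _ => True
  | BQuery.conj q₁ q₂ => q₁.WF ∧ q₂.WF
  | BQuery.eqSel q x _ => q.WF ∧ x ∈ q.fv
  | BQuery.proj _ q => q.WF
  | BQuery.maxU q₁ q₂ => q₁.WF ∧ q₂.WF ∧ q₁.fv = q₂.fv
  | BQuery.arithU q₁ q₂ => q₁.WF ∧ q₂.WF ∧ q₁.fv = q₂.fv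
  | BQuery.diff q₁ q₂ => q₁.WF ∧ q₂.WF ∧ q₁.fv = q₂.fv

/-- Semantics of BALG¹_ε queries under a valuation of the answer variables. -/
def BQuery.val (I : BagInterp) : BQuery → (Var → I.Δ) → ℕ∞
  | BQuery.atomC A t, f => I.cI A (termVal I f t)
  | BQuery.atomR P t₁ t₂, f => I.rI P (termVal I f t₁) (termVal I f t₂)
  | BQuery.conj q₁ q₂, f => q₁.val I f * q₂.val I f
  | BQuery.eqSel q x t, f => if f x = termVal I f t then q.val I f else 0
  | BQuery.proj ys q, f => bagSum (fun g : {g : Var → I.Δ // ∀ v, v ∉ ys → g v = f v} => q.val I g.1)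
  | BQuery.maxU q₁ q₂, f => max (q₁.val I f) (q₂.val I f)
  | BQuery.arithU q₁ q₂, f => q₁.val I f + q₂.val I f
  | BQuery.diff q₁ q₂, f => q₁.val I f - q₂.val I f

/-- Bag answers of a BALG¹_ε query with answer variables `xs` on a tuple `a`. -/
def BQuery.answer (Q : BQuery) (xs : List Var) (I : BagInterp) (a : List Ind) : ℕ∞ :=
  if a.length = xs.length then Q.val I (fun v => I.indMap (a.getD (xs.idxOf v) 0)) else 0

/- ## Enumerated bags, e-homomorphisms, and e-valuations -/

/-- Enumerated copies of a bag of domain elements (for an atomic concept). -/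
def EBagC (I : BagInterp) (A : AtomicConcept) : Type :=
  {p : I.Δ × ℕ // 1 ≤ p.2 ∧ (p.2 : ℕ∞) ≤ I.cI A p.1}

/-- Enumerated copies of a bag of pairs (for an atomic role). -/
def EBagR (I : BagInterp) (P : AtomicRole) : Type :=
  {p : (I.Δ × I.Δ) × ℕ // 1 ≤ p.2 ∧ (p.2 : ℕ∞) ≤ I.rI P p.1.1 p.1.2}

/-- An e-homomorphism between the enumerated versions of two bag interpretations. -/
structure EHom (I J : BagInterp) where
  h : I.Δ → J.Δ
  hInd : ∀ a : Ind, h (I.indMap a) = J.indMap a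
  hC : ∀ A : AtomicConcept, EBagC I A → EBagC J A
  hC_fst : ∀ (A : AtomicConcept) (x : EBagC I A), (hC A x).1.1 = h x.1.1
  hR : ∀ P : AtomicRole, EBagR I P → EBagR J P
  hR_fst : ∀ (P : AtomicRole) (x : EBagR I P), (hR P x).1.1 = (h x.1.1.1, h x.1.1.2)

/-- Predicate-injectivity on individuals of an e-homomorphism. -/
def EHom.PredInj {I J : BagInterp} (e : EHom I J) : Prop :=
  ∀ u : I.Δ, (∃ a : Ind, e.h u = J.indMap a) →
    (∀ A : AtomicConcept, ∀ x y : EBagC I A,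
      x.1.1 = u → y.1.1 = u → x.1.2 ≠ y.1.2 → e.hC A x ≠ e.hC A y) ∧
    (∀ P : AtomicRole, ∀ x y : EBagR I P, x.1.1.1 = u → y.1.1.1 = u →
      (x.1.1.2, x.1.2) ≠ (y.1.1.2, y.1.2) → e.hR P x ≠ e.hR P y) ∧
    (∀ P : AtomicRole, ∀ x y : EBagR I P, x.1.1.2 = u → y.1.1.2 = u →
      (x.1.1.1, x.1.2) ≠ (y.1.1.1, y.1.2) → e.hR P x ≠ e.hR P y)

/-- Enumerated atoms of a CQ (seen as a bag of atoms). -/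
def EAtom (q : CQ) : Type := {p : QAtom × ℕ // 1 ≤ p.2 ∧ p.2 ≤ q.atoms.count p.1}

/-- An e-valuation of the enumerated query `q^e` over the enumerated
interpretation `I^e`. -/
structure EVal (q : CQ) (I : BagInterp) where
  ν : Var → I.Δ
  hjunk : ∀ v, v ∉ q.vars → ν v = I.indMap 0
  heq : ∀ z t, QAtom.eqAt z t ∈ q.atoms → ν z = termVal I ν t
  ℓ : EAtom q → ℕ
  hone : ∀ e : EAtom q, 1 ≤ ℓ e
  hconcept : ∀ (e : EAtom q) (A : AtomicConcept) (t : Term),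
    e.1.1 = QAtom.conceptAt A t → (ℓ e : ℕ∞) ≤ I.cI A (termVal I ν t)
  hrole : ∀ (e : EAtom q) (P : AtomicRole) (t₁ t₂ : Term),
    e.1.1 = QAtom.roleAt P t₁ t₂ → (ℓ e : ℕ∞) ≤ I.rI P (termVal I ν t₁) (termVal I ν t₂)
  heqm : ∀ (e : EAtom q) (z : Var) (t : Term), e.1.1 = QAtom.eqAt z t → ℓ e = 1

/-- The tuple of domain elements to which an e-atom is sent by an e-valuation. -/
def EVal.imgTerms {q : CQ} {I : BagInterp} (ev : EVal q I) (e : EAtom q) : List I.Δ :=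
  (QAtom.terms e.1.1).map (termVal I ev.ν)

/-- The enumerated image of an e-atom under an e-valuation. -/
def EVal.img {q : CQ} {I : BagInterp} (ev : EVal q I) (e : EAtom q) : List I.Δ × ℕ :=
  (ev.imgTerms e, ev.ℓ e)

/- ## Auxiliary concrete queries -/

/-- The CQ `ζ_C(x)`: `A(x)`, `∃y.P(x,y)` or `∃y.P(y,x)`. -/
def zetaCQ : DLConcept → CQ
  | DLConcept.atomic A => ⟨[0], [], [QAtom.conceptAt A (Term.var 0)]⟩
  | DLConcept.ex (Role.atomic P) => ⟨[0], [1], [QAtom.roleAt P (Term.var 0) (Term.var 1)]⟩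
  | DLConcept.ex (Role.inv P) => ⟨[0], [1], [QAtom.roleAt P (Term.var 1) (Term.var 0)]⟩

/-- The CQ `q(x) = R(x,x)`. -/
def selfCQ (P : AtomicRole) : CQ := ⟨[0], [], [QAtom.roleAt P (Term.var 0) (Term.var 0)]⟩


/-!
In the canonical model every anonymous element satisfies each concept at most once and has,
for each role, at most one neighbour, reached with multiplicity one. Suppose two e-valuations
agree on every predicate e-atom whose image contains an individual. A predicate e-atom on which
they disagree then involves only anonymous elements, so both send it to multiplicity one: the
multiplicity labellings agree. If the variable assignments differed, safety would give a term
of a predicate atom where they differ. Along a role atom the difference propagates, since an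
anonymous element has a unique predecessor and a unique successor for each role; as `q` is
rooted and Boolean, it reaches an individual, where both valuations agree.
-/

def Role.inverse : Role → Role
  | Role.atomic P => Role.inv P
  | Role.inv P => Role.atomic P

lemma le_bagSum {α : Type*} (f : α → ℕ∞) (x : α) : f x ≤ bagSum f :=
  le_iSup_of_le ({x} : Finset α) (by simp)

lemma bagSum_le_one {α : Type*} {f : α → ℕ∞} (h1 : ∀ x, f x ≤ 1)
    (hU : ∀ x y, 0 < f x → 0 < f y → x = y) : bagSum f ≤ 1 := by
  refine iSup_le fun s => ?_
  by_cases h : ∃ x ∈ s, 0 < f x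
  · obtain ⟨x, hx, hfx⟩ := h
    rw [Finset.sum_eq_single_of_mem x hx fun y _ hyx =>
      by_contra fun hfy => hyx (hU y x (pos_iff_ne_zero.mpr hfy) hfx)]
    exact h1 x
  · push Not at h
    rw [Finset.sum_eq_zero fun x hx => nonpos_iff_eq_zero.mp (h x hx)]
    exact zero_le

structure BagInterp.IsAnonFunctional (I : BagInterp) : Prop where
  cI_le_one : ∀ A x, x ∉ Set.range I.indMap → I.cI A x ≤ 1
  roleMult_le_one : ∀ S x y, x ∉ Set.range I.indMap → I.roleMult S x y ≤ 1
  roleMult_unique : ∀ S x y₁ y₂, x ∉ Set.range I.indMap →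
    0 < I.roleMult S x y₁ → 0 < I.roleMult S x y₂ → y₁ = y₂

namespace BagInterp.IsAnonFunctional

variable {I : BagInterp} (hI : I.IsAnonFunctional) {x : I.Δ} (hx : x ∉ Set.range I.indMap)
include hI hx

lemma conceptMult_le_one (C : DLConcept) : I.conceptMult C x ≤ 1 := by
  cases C with
  | atomic A => exact hI.cI_le_one A x hx
  | ex S =>
    exact bagSum_le_one (fun y => hI.roleMult_le_one S x y hx)
      (fun y₁ y₂ => hI.roleMult_unique S x y₁ y₂ hx)

lemma cclI_le_one (T : TBox) (C : DLConcept) : cclI T I C x ≤ 1 :=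
  iSup_le fun C₀ => hI.conceptMult_le_one hx C₀.1

lemma roleMult_eq_zero_of_lt_cclI {T : TBox} {S : Role}
    (hlt : I.conceptMult (DLConcept.ex S) x < cclI T I (DLConcept.ex S) x) (y : I.Δ) :
    I.roleMult S x y = 0 := by
  have h0 : I.conceptMult (DLConcept.ex S) x = 0 :=
    Order.lt_one_iff.mp (hlt.trans_le (hI.cclI_le_one hx T _))
  exact nonpos_iff_eq_zero.mp ((le_bagSum _ y).trans h0.le)

end BagInterp.IsAnonFunctional

namespace PreInterp

variable {P : PreInterp} {T : TBox}

def RolesSupported (P : PreInterp) : Prop :=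
  ∀ P₀ u v, 0 < P.r P₀ u v → u ∈ P.active ∧ v ∈ P.active

lemma newAnon_anon_iff {u : CanElem} {R : Role} {j : ℕ} :
    P.NewAnon T (CanElem.anon u R j) ↔ u ∈ P.active ∧ (j : ℕ∞) < P.delta T u R := by
  constructor
  · rintro ⟨u', R', j', he, hu', hj'⟩
    cases he
    exact ⟨hu', hj'⟩
  · rintro ⟨hu, hj⟩
    exact ⟨u, R, j, rfl, hu, hj⟩

lemma step_r_le_max (P₀ : AtomicRole) (u v : CanElem) :
    (P.step T).r P₀ u v ≤ max (P.r P₀ u v) 1 := by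
  simp only [step]
  split_ifs <;> simp

lemma step_roleMult_le_max (S : Role) (u v : CanElem) :
    (P.step T).toInterp.roleMult S u v ≤ max (P.toInterp.roleMult S u v) 1 := by
  cases S <;> exact step_r_le_max _ _ _

lemma step_roleMult_pos {S : Role} {u v : CanElem}
    (h : 0 < (P.step T).toInterp.roleMult S u v) :
    (u ∈ P.active ∧ v ∈ P.active ∧ 0 < P.toInterp.roleMult S u v) ∨
    (¬ (u ∈ P.active ∧ v ∈ P.active) ∧ ∃ j, v = CanElem.anon u S j ∧ P.NewAnon T v) ∨
    (¬ (u ∈ P.active ∧ v ∈ P.active) ∧ ∃ j, u = CanElem.anon v S.inverse j ∧ P.NewAnon T u) := by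
  cases S <;>
  · simp only [BagInterp.roleMult, toInterp, step, Role.inverse] at h ⊢
    split_ifs at h <;> first
      | exact absurd h (lt_irrefl 0)
      | exact Or.inl ⟨by tauto, by tauto, h⟩
      | exact Or.inr (Or.inl ⟨by tauto, ‹_›⟩)
      | exact Or.inr (Or.inr ⟨by tauto, ‹_›⟩)

lemma rolesSupported_step (P : PreInterp) (T : TBox) : (P.step T).RolesSupported := by
  intro P₀ u v h
  have hsub : P.active ⊆ (P.step T).active := Set.subset_union_left
  have hnew {w : CanElem} (hw : P.NewAnon T w) : w ∈ (P.step T).active := Set.mem_union_right _ hw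
  rcases step_roleMult_pos (S := Role.atomic P₀) h with
    ⟨hu, hv, -⟩ | ⟨-, j, rfl, hv⟩ | ⟨-, j, rfl, hu⟩
  · exact ⟨hsub hu, hsub hv⟩
  · exact ⟨hsub (newAnon_anon_iff.mp hv).1, hnew hv⟩
  · exact ⟨hnew hu, hsub (newAnon_anon_iff.mp hu).1⟩

lemma RolesSupported.r_le_step (hP : P.RolesSupported) (P₀ : AtomicRole) (u v : CanElem) :
    P.r P₀ u v ≤ (P.step T).r P₀ u v := by
  simp only [step]
  split_ifs with h
  · exact le_rfl
  all_goals
    rcases eq_zero_or_pos (P.r P₀ u v) with h0 | hpos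
    · exact h0.le.trans zero_le
    · exact absurd (hP P₀ u v hpos) h

lemma step_roleMult_pos_of_anon (hP : P.toInterp.IsAnonFunctional) {S : Role} {w v : CanElem}
    (hw : w ∉ Set.range CanElem.ind) (h : 0 < (P.step T).toInterp.roleMult S w v) :
    (w ∈ P.active ∧ 0 < P.toInterp.roleMult S w v) ∨
    (w ∈ P.active ∧ 0 < P.delta T w S ∧ v = CanElem.anon w S 0) ∨
    (w ∉ P.active ∧ ∃ j, w = CanElem.anon v S.inverse j) := by
  rcases step_roleMult_pos h with ⟨hwA, -, hpos⟩ | ⟨-, j, rfl, hnew⟩ | ⟨hnot, j, rfl, hnew⟩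
  · exact Or.inl ⟨hwA, hpos⟩
  · obtain ⟨hwA, hj⟩ := newAnon_anon_iff.mp hnew
    have hj0 : j = 0 := by
      have : (j : ℕ∞) < 1 := hj.trans_le (tsub_le_self.trans (hP.cclI_le_one hw T _))
      exact Nat.lt_one_iff.mp (by exact_mod_cast this)
    subst hj0
    exact Or.inr (Or.inl ⟨hwA, hj, rfl⟩)
  · exact Or.inr (Or.inr ⟨fun hwA => hnot ⟨hwA, (newAnon_anon_iff.mp hnew).1⟩, j, rfl⟩)

lemma isAnonFunctional_step (hP : P.toInterp.IsAnonFunctional) :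
    (P.step T).toInterp.IsAnonFunctional where
  cI_le_one A x hx := by
    show (if x ∈ P.active then P.ccl T x (DLConcept.atomic A) else 0) ≤ 1
    split_ifs
    · exact hP.cclI_le_one hx T _
    · exact zero_le
  roleMult_le_one S x y hx :=
    (step_roleMult_le_max S x y).trans (max_le (hP.roleMult_le_one S x y hx) le_rfl)
  roleMult_unique S w v₁ v₂ hw h₁ h₂ := by
    have hold {v} (hδ : 0 < P.delta T w S) : ¬ 0 < P.toInterp.roleMult S w v := by
      rw [hP.roleMult_eq_zero_of_lt_cclI hw (tsub_pos_iff_lt.mp hδ) v]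
      exact lt_irrefl 0
    rcases step_roleMult_pos_of_anon hP hw h₁ with ⟨hA₁, p₁⟩ | ⟨hA₁, hδ₁, rfl⟩ | ⟨hA₁, j₁, e₁⟩ <;>
    rcases step_roleMult_pos_of_anon hP hw h₂ with ⟨hA₂, p₂⟩ | ⟨hA₂, hδ₂, rfl⟩ | ⟨hA₂, j₂, e₂⟩
    · exact hP.roleMult_unique S w v₁ v₂ hw p₁ p₂
    · exact absurd p₁ (hold hδ₂)
    · exact absurd hA₁ hA₂
    · exact absurd p₂ (hold hδ₁)
    · rfl
    · exact absurd hA₁ hA₂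
    · exact absurd hA₂ hA₁
    · exact absurd hA₂ hA₁
    · cases e₁.symm.trans e₂
      rfl

end PreInterp

section CanonicalModel

variable (K : Ontology)

lemma canStage_rolesSupported : ∀ i, (canStage K i).RolesSupported
  | 0 => fun P₀ u v h => by
    cases u <;> cases v <;> first | exact absurd h (lt_irrefl 0) | exact ⟨⟨_, rfl⟩, ⟨_, rfl⟩⟩
  | i + 1 => (canStage K i).rolesSupported_step K.tbox

lemma canStage_isAnonFunctional : ∀ i, (canStage K i).toInterp.IsAnonFunctional
  | 0 =>
    { cI_le_one := fun A x hx => by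
        cases x with
        | ind a => exact absurd ⟨a, rfl⟩ hx
        | anon => exact zero_le
      roleMult_le_one := fun S x y hx => by
        cases x with
        | ind a => exact absurd ⟨a, rfl⟩ hx
        | anon => cases S <;> cases y <;> exact zero_le
      roleMult_unique := fun S x y₁ _ hx h₁ _ => by
        cases x with
        | ind a => exact absurd ⟨a, rfl⟩ hx
        | anon => cases S <;> cases y₁ <;> exact absurd h₁ (lt_irrefl 0) }
  | i + 1 => PreInterp.isAnonFunctional_step (canStage_isAnonFunctional i)

lemma canStage_roleMult_mono (S : Role) (u v : CanElem) :
    Monotone fun i => (canStage K i).toInterp.roleMult S u v := by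
  cases S <;>
  exact monotone_nat_of_le_succ fun i => (canStage_rolesSupported K i).r_le_step _ _ _

lemma canInterp_roleMult (S : Role) (u v : CanElem) :
    (canInterp K).roleMult S u v = ⨆ i, (canStage K i).toInterp.roleMult S u v := by
  cases S <;> rfl

theorem canInterp_isAnonFunctional : (canInterp K).IsAnonFunctional where
  cI_le_one A x hx := iSup_le fun i => (canStage_isAnonFunctional K i).cI_le_one A x hx
  roleMult_le_one S x y hx := (canInterp_roleMult K S x y).trans_le <|
    iSup_le fun i => (canStage_isAnonFunctional K i).roleMult_le_one S x y hx
  roleMult_unique S x y₁ y₂ hx h₁ h₂ := by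
    obtain ⟨i₁, hi₁⟩ := lt_iSup_iff.mp (h₁.trans_eq (canInterp_roleMult K S x y₁))
    obtain ⟨i₂, hi₂⟩ := lt_iSup_iff.mp (h₂.trans_eq (canInterp_roleMult K S x y₂))
    exact (canStage_isAnonFunctional K (max i₁ i₂)).roleMult_unique S x y₁ y₂ hx
      (hi₁.trans_le (canStage_roleMult_mono K S x y₁ (le_max_left i₁ i₂)))
      (hi₂.trans_le (canStage_roleMult_mono K S x y₂ (le_max_right i₁ i₂)))

end CanonicalModel

lemma BagInterp.IsAnonFunctional.eq_iff_of_rI_pos {I : BagInterp} (hI : I.IsAnonFunctional)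
    {P : AtomicRole} {x₁ y₁ x₂ y₂ : I.Δ} (h₁ : 0 < I.rI P x₁ y₁) (h₂ : 0 < I.rI P x₂ y₂)
    (hind : ∀ a, I.indMap a ∈ [x₁, y₁] ∨ I.indMap a ∈ [x₂, y₂] → [x₁, y₁] = [x₂, y₂]) :
    x₁ = x₂ ↔ y₁ = y₂ := by
  constructor
  · rintro rfl
    by_cases hx : x₁ ∈ Set.range I.indMap
    · obtain ⟨a, rfl⟩ := hx
      simpa using hind a (by simp)
    · exact hI.roleMult_unique (Role.atomic P) x₁ y₁ y₂ hx h₁ h₂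
  · rintro rfl
    by_cases hy : y₁ ∈ Set.range I.indMap
    · obtain ⟨a, rfl⟩ := hy
      simpa using hind a (by simp)
    · exact hI.roleMult_unique (Role.inv P) y₁ x₁ x₂ hy h₁ h₂

lemma QAtom.mult_le_one_of_anon {I : BagInterp} (hI : I.IsAnonFunctional) (atm : QAtom)
    (f : Var → I.Δ) {x : I.Δ} (hx : x ∈ atm.terms.map (termVal I f))
    (hxa : x ∉ Set.range I.indMap) : atm.mult I f ≤ 1 := by
  cases atm with
  | conceptAt A t =>
    simp only [QAtom.terms, List.map_cons, List.map_nil, List.mem_singleton] at hx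
    subst hx
    exact hI.cI_le_one A _ hxa
  | roleAt P t₁ t₂ =>
    simp only [QAtom.terms, List.map_cons, List.map_nil, List.mem_cons, List.not_mem_nil,
      or_false] at hx
    rcases hx with rfl | rfl
    · exact hI.roleMult_le_one (Role.atomic P) _ _ hxa
    · exact hI.roleMult_le_one (Role.inv P) _ _ hxa
  | eqAt z t =>
    simp only [QAtom.mult]
    split_ifs <;> simp

lemma EAtom.mem_atoms {q : CQ} (e : EAtom q) : e.1.1 ∈ q.atoms :=
  List.count_pos_iff.mp (e.2.1.trans e.2.2)

namespace EVal

variable {q : CQ} {I : BagInterp}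

lemma termVal_eq_of_eqRel (ev : EVal q I) {t₁ t₂ : Term} (h : q.eqRel t₁ t₂) :
    termVal I ev.ν t₁ = termVal I ev.ν t₂ := by
  induction h with
  | rel _ _ hab =>
    obtain ⟨z, t, hmem, h₁, h₂⟩ := hab
    rw [h₁, h₂]
    exact ev.heq z t hmem
  | refl => rfl
  | symm _ _ _ ih => exact ih.symm
  | trans _ _ _ _ _ ih₁ ih₂ => exact ih₁.trans ih₂

lemma ℓ_le_mult (ev : EVal q I) (e : EAtom q) : (ev.ℓ e : ℕ∞) ≤ e.1.1.mult I ev.ν := by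
  rcases he : e.1.1 with ⟨A, t⟩ | ⟨P, t₁, t₂⟩ | ⟨z, t⟩
  · exact ev.hconcept e A t he
  · exact ev.hrole e P t₁ t₂ he
  · have hmem : QAtom.eqAt z t ∈ q.atoms := he ▸ e.mem_atoms
    simp [QAtom.mult, ev.heq z t hmem, ev.heqm e z t he]

lemma mult_pos (ev : EVal q I) (e : EAtom q) : 0 < e.1.1.mult I ev.ν :=
  lt_of_lt_of_le (by exact_mod_cast ev.hone e) (ev.ℓ_le_mult e)

lemma exists_mem_imgTerms (ev : EVal q I) (e : EAtom q) : ∃ x, x ∈ ev.imgTerms e := by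
  obtain ⟨⟨atm, m⟩, hm⟩ := e
  cases atm <;> simp [imgTerms, QAtom.terms]

lemma ℓ_eq_one_of_anon (hI : I.IsAnonFunctional) (ev : EVal q I) {e : EAtom q} {x : I.Δ}
    (hx : x ∈ ev.imgTerms e) (hxa : x ∉ Set.range I.indMap) : ev.ℓ e = 1 := by
  have h := (ev.ℓ_le_mult e).trans (QAtom.mult_le_one_of_anon hI _ _ hx hxa)
  exact le_antisymm (by exact_mod_cast h) (ev.hone e)

def AgreeAtInds (ev₁ ev₂ : EVal q I) : Prop :=
  ∀ (a : Ind) (e : EAtom q), (∀ z t, e.1.1 ≠ QAtom.eqAt z t) →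
    (I.indMap a ∈ ev₁.imgTerms e ∨ I.indMap a ∈ ev₂.imgTerms e) → ev₁.img e = ev₂.img e

namespace AgreeAtInds

variable {ev₁ ev₂ : EVal q I} (H : ev₁.AgreeAtInds ev₂) (hI : I.IsAnonFunctional)
include H hI

lemma ℓ_eq : ev₁.ℓ = ev₂.ℓ := by
  funext e
  by_cases heq : ∃ z t, e.1.1 = QAtom.eqAt z t
  · obtain ⟨z, t, he⟩ := heq
    exact (ev₁.heqm e z t he).trans (ev₂.heqm e z t he).symm
  push Not at heq
  by_contra hne
  have hanon {x} (hx : x ∈ ev₁.imgTerms e ∨ x ∈ ev₂.imgTerms e) : x ∉ Set.range I.indMap := by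
    rintro ⟨a, rfl⟩
    exact hne (congrArg Prod.snd (H a e heq hx))
  obtain ⟨x₁, hx₁⟩ := ev₁.exists_mem_imgTerms e
  obtain ⟨x₂, hx₂⟩ := ev₂.exists_mem_imgTerms e
  exact hne ((ev₁.ℓ_eq_one_of_anon hI hx₁ (hanon (Or.inl hx₁))).trans
    (ev₂.ℓ_eq_one_of_anon hI hx₂ (hanon (Or.inr hx₂))).symm)

lemma termVal_eq_iff_of_roleAt {P : AtomicRole} {t₁ t₂ : Term}
    (hmem : QAtom.roleAt P t₁ t₂ ∈ q.atoms) :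
    termVal I ev₁.ν t₁ = termVal I ev₂.ν t₁ ↔ termVal I ev₁.ν t₂ = termVal I ev₂.ν t₂ := by
  let e : EAtom q := ⟨(QAtom.roleAt P t₁ t₂, 1), le_rfl, List.count_pos_iff.mpr hmem⟩
  exact hI.eq_iff_of_rI_pos (ev₁.mult_pos e) (ev₂.mult_pos e)
    fun a ha => congrArg Prod.fst (H a e (fun _ _ h => QAtom.noConfusion h) ha)

lemma termVal_ne_of_gaifmanAdj {s s' : Term} (hadj : q.gaifmanAdj s s')
    (hs : termVal I ev₁.ν s ≠ termVal I ev₂.ν s) :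
    termVal I ev₁.ν s' ≠ termVal I ev₂.ν s' := by
  obtain ⟨atm, hmem, hs_mem, hs'_mem⟩ := hadj
  cases atm with
  | conceptAt A t =>
    simp only [QAtom.terms, List.mem_singleton] at hs_mem hs'_mem
    subst hs_mem hs'_mem
    exact hs
  | roleAt P t₁ t₂ =>
    have hiff := H.termVal_eq_iff_of_roleAt hI hmem
    simp only [QAtom.terms, List.mem_cons, List.not_mem_nil, or_false] at hs_mem hs'_mem
    rcases hs_mem with rfl | rfl <;> rcases hs'_mem with rfl | rfl <;> tauto
  | eqAt z t =>
    have h₁ := ev₁.heq z t hmem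
    have h₂ := ev₂.heq z t hmem
    simp only [QAtom.terms, List.mem_cons, List.not_mem_nil, or_false] at hs_mem hs'_mem
    rcases hs_mem with rfl | rfl <;> rcases hs'_mem with rfl | rfl <;> simp_all [termVal]

lemma termVal_ne_of_reflTransGen {s s' : Term} (hpath : Relation.ReflTransGen q.gaifmanAdj s s')
    (hs : termVal I ev₁.ν s ≠ termVal I ev₂.ν s) :
    termVal I ev₁.ν s' ≠ termVal I ev₂.ν s' := by
  induction hpath with
  | refl => exact hs
  | tail _ hadj ih => exact H.termVal_ne_of_gaifmanAdj hI hadj ih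

lemma ν_eq (hsafe : q.Safe) (hr : q.Rooted) (hbool : q.answerVars = []) : ev₁.ν = ev₂.ν := by
  funext v
  by_contra hv
  have hvq : v ∈ q.vars := by
    by_contra hvq
    exact hv ((ev₁.hjunk v hvq).trans (ev₂.hjunk v hvq).symm)
  obtain ⟨t, atm, hatm, -, ht, hrel⟩ := hsafe v hvq
  have hdt : termVal I ev₁.ν t ≠ termVal I ev₂.ν t := fun h =>
    hv ((ev₁.termVal_eq_of_eqRel hrel).trans (h.trans (ev₂.termVal_eq_of_eqRel hrel).symm))
  obtain ⟨t', hpath, hroot⟩ := hr t ⟨atm, hatm, ht⟩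
  rcases hroot with ⟨v₀, hv₀, -⟩ | ⟨a, rfl⟩
  · simp [hbool] at hv₀
  · exact H.termVal_ne_of_reflTransGen hI hpath hdt rfl

end AgreeAtInds

end EVal

theorem statement_16_general (K : Ontology)
    (q : CQ) (hwf : q.WellFormed) (hr : q.Rooted) (hbool : q.answerVars = [])
    (ev1 ev2 : EVal q (canInterp K))
    (hdiff : ev1.ν ≠ ev2.ν ∨ ev1.ℓ ≠ ev2.ℓ) :
    ∃ (a : Ind) (e : EAtom q) (i : Fin 2),
      (∀ z t, e.1.1 ≠ QAtom.eqAt z t) ∧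
      (canInterp K).indMap a ∈ EVal.imgTerms (if i = 0 then ev1 else ev2) e ∧
      ev1.img e ≠ ev2.img e := by
  by_contra hcon
  have H : ev1.AgreeAtInds ev2 := by
    intro a e he hmem
    by_contra hne
    rcases hmem with h | h
    · exact hcon ⟨a, e, 0, he, h, hne⟩
    · exact hcon ⟨a, e, 1, he, h, hne⟩
  have hI := canInterp_isAnonFunctional K
  rcases hdiff with hν | hℓ
  · exact hν (H.ν_eq hI hwf.2.2.2.2 hr hbool)
  · exact hℓ (H.ℓ_eq hI)

/-- Let `q` be a rooted Boolean CQ and `K` a DL-Lite_core^bag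
ontology.  If two e-valuations of `q^e` over `C(K)^e` are different, then there
exist an individual `a`, a (non-equality) e-atom `[S(t):m]` of `q^e` and
`i ∈ {1,2}` such that `ν^i(a)` occurs among the components of `ν^i(t)` and the
two e-valuations send `[S(t):m]` to different enumerated tuples. -/
theorem statement_16 (K : Ontology) (hcore : TBox.IsCore K.tbox)
    (q : CQ) (hwf : q.WellFormed) (hr : q.Rooted) (hbool : q.answerVars = [])
    (ev1 ev2 : EVal q (canInterp K))
    (hdiff : ev1.ν ≠ ev2.ν ∨ ev1.ℓ ≠ ev2.ℓ) :
    ∃ (a : Ind) (e : EAtom q) (i : Fin 2),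
      (∀ z t, e.1.1 ≠ QAtom.eqAt z t) ∧
      (canInterp K).indMap a ∈ EVal.imgTerms (if i = 0 then ev1 else ev2) e ∧
      ev1.img e ≠ ev2.img e :=
  statement_16_general K q hwf hr hbool ev1 ev2 hdiff
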